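/- arXiv:0812.0598 — 2 statements merged into one kernel-verified Lean document; each statement's English description precedes it below -/
import Mathlib

section
/- Consider the 7-player preference game with players a₁, a₂, b₁, b₂, c₁, c₂, x having preference lists a₁:(a₂,a₁), a₂:(a₁,a₂), b₁:(b₂,b₁), b₂:(b₁,b₂), c₁:(c₂,c₁), c₂:(c₁,c₂), x:(a₁,b₁,c₁,x). The two assignments w and w' described below are both equilibria, but the midpoint ½w + ½w' is not an equilibrium; hence the set of equilibria of a preference game need not be convex. -/
attribute [local instance] Classical.propDecidable

/-- The seven players of the non-convexity example. -/
inductive Pl where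
  | a1 | a2 | b1 | b2 | c1 | c2 | x
  deriving DecidableEq

instance : Fintype Pl :=
  ⟨{Pl.a1, Pl.a2, Pl.b1, Pl.b2, Pl.c1, Pl.c2, Pl.x}, by intro p; cases p <;> simp⟩

open Pl

/-- Rank of each strategy within each player's preference list (`0` = most
preferred); strategies not on the list get a large rank (they receive weight
`0` in equilibrium). Lists: `a₁:(a₂,a₁)`, `a₂:(a₁,a₂)`, `b₁:(b₂,b₁)`,
`b₂:(b₁,b₂)`, `c₁:(c₂,c₁)`, `c₂:(c₁,c₂)`, `x:(a₁,b₁,c₁,x)`. -/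
def rank : Pl → Pl → ℕ
  | a1, a2 => 0 | a1, a1 => 1
  | a2, a1 => 0 | a2, a2 => 1
  | b1, b2 => 0 | b1, b1 => 1
  | b2, b1 => 0 | b2, b2 => 1
  | c1, c2 => 0 | c1, c1 => 1
  | c2, c1 => 0 | c2, c2 => 1
  | x, a1 => 0 | x, b1 => 1 | x, c1 => 2 | x, x => 3
  | _, _ => 9

/-- The induced total preorder: `pref i j k` means `j ≥ᵢ k`. -/
def pref (i j k : Pl) : Prop := rank i j ≤ rank i k

def Feasible (w : Pl → Pl → ℝ) : Prop :=
  (∀ i j, 0 ≤ w i j) ∧ (∀ i, ∑ j, w i j = 1) ∧ (∀ i j, w i j ≤ w j j)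

def LexGE (i : Pl) (wi wi' : Pl → ℝ) : Prop :=
  ∀ j, ∑ k ∈ Finset.univ.filter (fun k => pref i k j), wi' k ≤
       ∑ k ∈ Finset.univ.filter (fun k => pref i k j), wi k

def Equilibrium (w : Pl → Pl → ℝ) : Prop :=
  Feasible w ∧
    ∀ i (wi' : Pl → ℝ), Feasible (Function.update w i wi') → LexGE i (w i) wi'

/-- The first equilibrium `w`. -/
noncomputable def wA : Pl → Pl → ℝ
  | a1, a1 => 1/2 | a1, a2 => 1/2
  | a2, a2 => 1/2 | a2, a1 => 1/2
  | b1, b1 => 1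
  | b2, b1 => 1
  | c1, c2 => 1
  | c2, c2 => 1
  | x, a1 => 1/2 | x, b1 => 1/2
  | _, _ => 0

/-- The second equilibrium `w'`. -/
noncomputable def wB : Pl → Pl → ℝ
  | a1, a1 => 1/2 | a1, a2 => 1/2
  | a2, a2 => 1/2 | a2, a1 => 1/2
  | b1, b2 => 1
  | b2, b2 => 1
  | c1, c1 => 1
  | c2, c1 => 1
  | x, a1 => 1/2 | x, c1 => 1/2
  | _, _ => 0

lemma sum_univ (f : Pl → ℝ) : ∑ j, f j = f a1 + f a2 + f b1 + f b2 + f c1 + f c2 + f x := by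
  show ∑ j ∈ {a1, a2, b1, b2, c1, c2, Pl.x}, f j = _
  simp [Finset.sum_insert]; ring

lemma eqB : Equilibrium wB := by
  constructor
  · refine ⟨?_, ?_, ?_⟩
    · intro i j; cases i <;> cases j <;> norm_num [wB]
    · intro i; rw [sum_univ]; cases i <;> norm_num [wB]
    · intro i j; cases i <;> cases j <;> norm_num [wB]
  · intro i wi' hf
    obtain ⟨hpos, hsum, hcol⟩ := hf
    have hpos' : ∀ k, 0 ≤ wi' k := fun k => by
      have := hpos i k; simpa using this
    have hsum' : wi' a1 + wi' a2 + wi' b1 + wi' b2 + wi' c1 + wi' c2 + wi' x = 1 := by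
      have := hsum i; rw [sum_univ] at this; simpa using this
    have hcol' : ∀ j, j ≠ i → wi' j ≤ wB j j := by
      intro j hj
      have := hcol i j
      rwa [Function.update_self, Function.update_of_ne hj] at this
    have p1 := hpos' a1; have p2 := hpos' a2; have p3 := hpos' b1
    have p4 := hpos' b2; have p5 := hpos' c1; have p6 := hpos' c2
    have p7 := hpos' Pl.x
    cases i with
    | a1 =>
        have h1 : wi' a2 ≤ 1/2 := by have := hcol' a2 (by simp); simpa [wB] using this
        intro j
        rw [Finset.sum_filter, Finset.sum_filter, sum_univ, sum_univ]
        cases j <;> norm_num [pref, rank, wB] <;> linarith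
    | a2 =>
        have h1 : wi' a1 ≤ 1/2 := by have := hcol' a1 (by simp); simpa [wB] using this
        intro j
        rw [Finset.sum_filter, Finset.sum_filter, sum_univ, sum_univ]
        cases j <;> norm_num [pref, rank, wB] <;> linarith
    | b1 =>
        intro j
        rw [Finset.sum_filter, Finset.sum_filter, sum_univ, sum_univ]
        cases j <;> norm_num [pref, rank, wB] <;> linarith
    | b2 =>
        have h1 : wi' b1 ≤ 0 := by have := hcol' b1 (by simp); simpa [wB] using this
        intro j
        rw [Finset.sum_filter, Finset.sum_filter, sum_univ, sum_univ]
        cases j <;> norm_num [pref, rank, wB] <;> linarith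
    | c1 =>
        have h1 : wi' c2 ≤ 0 := by have := hcol' c2 (by simp); simpa [wB] using this
        intro j
        rw [Finset.sum_filter, Finset.sum_filter, sum_univ, sum_univ]
        cases j <;> norm_num [pref, rank, wB] <;> linarith
    | c2 =>
        intro j
        rw [Finset.sum_filter, Finset.sum_filter, sum_univ, sum_univ]
        cases j <;> norm_num [pref, rank, wB] <;> linarith
    | x =>
        have h1 : wi' a1 ≤ 1/2 := by have := hcol' a1 (by simp); simpa [wB] using this
        have h2 : wi' b1 ≤ 0 := by have := hcol' b1 (by simp); simpa [wB] using this
        intro j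
        rw [Finset.sum_filter, Finset.sum_filter, sum_univ, sum_univ]
        cases j <;> norm_num [pref, rank, wB] <;> linarith

noncomputable def dev : Pl → ℝ
  | a1 => 1/2 | b1 => 1/2 | _ => 0

lemma notEqM : ¬ Equilibrium (fun i j => (wA i j + wB i j) / 2) := by
  rintro ⟨-, h⟩
  have hf : Feasible (Function.update (fun i j => (wA i j + wB i j) / 2) Pl.x dev) := by
    refine ⟨?_, ?_, ?_⟩
    · intro i j
      rcases eq_or_ne i Pl.x with rfl | hi
      · rw [Function.update_self]; cases j <;> norm_num [dev]
      · rw [Function.update_of_ne hi]; cases i <;> cases j <;> norm_num [wA, wB]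
    · intro i
      rw [sum_univ]
      rcases eq_or_ne i Pl.x with rfl | hi
      · rw [Function.update_self]; norm_num [dev]
      · rw [Function.update_of_ne hi]; cases i <;> norm_num [wA, wB]
    · intro i j
      rcases eq_or_ne i Pl.x with rfl | hi <;> rcases eq_or_ne j Pl.x with rfl | hj
      · rw [Function.update_self]
      · rw [Function.update_self, Function.update_of_ne hj]
        cases j <;> norm_num [dev, wA, wB]
      · rw [Function.update_of_ne hi, Function.update_self]
        cases i <;> norm_num [dev, wA, wB]
      · rw [Function.update_of_ne hi, Function.update_of_ne hj]
        cases i <;> cases j <;> norm_num [wA, wB]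
  have := h Pl.x dev hf b1
  rw [Finset.sum_filter, Finset.sum_filter, sum_univ, sum_univ] at this
  norm_num [pref, rank, wA, wB, dev] at this

lemma eqA : Equilibrium wA := by
  constructor
  · refine ⟨?_, ?_, ?_⟩
    · intro i j; cases i <;> cases j <;> norm_num [wA]
    · intro i; rw [sum_univ]; cases i <;> norm_num [wA]
    · intro i j; cases i <;> cases j <;> norm_num [wA]
  · intro i wi' hf
    obtain ⟨hpos, hsum, hcol⟩ := hf
    have hpos' : ∀ k, 0 ≤ wi' k := fun k => by
      have := hpos i k; simpa using this
    have hsum' : wi' a1 + wi' a2 + wi' b1 + wi' b2 + wi' c1 + wi' c2 + wi' x = 1 := by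
      have := hsum i; rw [sum_univ] at this; simpa using this
    have hcol' : ∀ j, j ≠ i → wi' j ≤ wA j j := by
      intro j hj
      have := hcol i j
      rwa [Function.update_self, Function.update_of_ne hj] at this
    have p1 := hpos' a1; have p2 := hpos' a2; have p3 := hpos' b1
    have p4 := hpos' b2; have p5 := hpos' c1; have p6 := hpos' c2
    have p7 := hpos' Pl.x
    cases i with
    | a1 =>
        have h1 : wi' a2 ≤ 1/2 := by have := hcol' a2 (by simp); simpa [wA] using this
        intro j
        rw [Finset.sum_filter, Finset.sum_filter, sum_univ, sum_univ]
        cases j <;> norm_num [pref, rank, wA] <;> linarith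
    | a2 =>
        have h1 : wi' a1 ≤ 1/2 := by have := hcol' a1 (by simp); simpa [wA] using this
        intro j
        rw [Finset.sum_filter, Finset.sum_filter, sum_univ, sum_univ]
        cases j <;> norm_num [pref, rank, wA] <;> linarith
    | b1 =>
        have h1 : wi' b2 ≤ 0 := by have := hcol' b2 (by simp); simpa [wA] using this
        intro j
        rw [Finset.sum_filter, Finset.sum_filter, sum_univ, sum_univ]
        cases j <;> norm_num [pref, rank, wA] <;> linarith
    | b2 =>
        intro j
        rw [Finset.sum_filter, Finset.sum_filter, sum_univ, sum_univ]
        cases j <;> norm_num [pref, rank, wA] <;> linarith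
    | c1 =>
        intro j
        rw [Finset.sum_filter, Finset.sum_filter, sum_univ, sum_univ]
        cases j <;> norm_num [pref, rank, wA] <;> linarith
    | c2 =>
        have h1 : wi' c1 ≤ 0 := by have := hcol' c1 (by simp); simpa [wA] using this
        intro j
        rw [Finset.sum_filter, Finset.sum_filter, sum_univ, sum_univ]
        cases j <;> norm_num [pref, rank, wA] <;> linarith
    | x =>
        have h1 : wi' a1 ≤ 1/2 := by have := hcol' a1 (by simp); simpa [wA] using this
        intro j
        rw [Finset.sum_filter, Finset.sum_filter, sum_univ, sum_univ]
        cases j <;> norm_num [pref, rank, wA] <;> linarith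

/-- `w` and `w'` are both equilibria of the preference game, but their
midpoint `½w + ½w'` is not; hence the set of equilibria of a preference game
need not be convex. -/
theorem equilibria_not_convex :
    Equilibrium wA ∧ Equilibrium wB ∧
      ¬ Equilibrium (fun i j => (wA i j + wB i j) / 2) := by
  exact ⟨eqA, eqB, notEqM⟩
end

section
/- Two-player cycle-equilibrium lemma: let R, C be the payoff matrices. Define the directed bipartite graph G' on nodes {r₁,...,r_m} ∪ {c₁,...,c_n} with edge r_i → c_j iff R(i,j) ≥ R(i',j) for all i', and edge c_j → r_i iff C(i,j) ≥ C(i,j') for all j'. Then any directed cycle (r_{i₁}, c_{j₁}, r_{i₂}, c_{j₂}, ..., r_{i_ℓ}, c_{j_ℓ}) in G', with each player assigning weight 1/ℓ to each of its strategies appearing on the cycle (and counting multiplicity), yields a personalized equilibrium of the two-player game. -/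
/-- The personalized payoff of a player with payoff matrix `R`, given
distributions `x` (own) and `y` (opponent): maximum over couplings with
marginals `x`, `y`. -/
noncomputable def payoff {m n : ℕ} (R : Fin m → Fin n → ℝ)
    (x : Fin m → ℝ) (y : Fin n → ℝ) : ℝ :=
  sSup {v : ℝ | ∃ u : Fin m → Fin n → ℝ,
    (∀ i j, 0 ≤ u i j) ∧ (∀ i, ∑ j, u i j = x i) ∧ (∀ j, ∑ i, u i j = y j) ∧
    v = ∑ i, ∑ j, u i j * R i j}

def IsDistFin {m : ℕ} (x : Fin m → ℝ) : Prop := (∀ i, 0 ≤ x i) ∧ ∑ i, x i = 1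

open Finset

lemma sum_shift_cycle {ℓ : ℕ} (g : ℕ → ℝ) (hg : g ℓ = g 0) :
    ∑ t ∈ range ℓ, g (t + 1) = ∑ t ∈ range ℓ, g t := by
  have h1 := Finset.sum_range_succ' g ℓ
  have h2 := Finset.sum_range_succ g ℓ
  rw [h2] at h1
  linarith

lemma ind_nonneg {P : Prop} [Decidable P] : (0:ℝ) ≤ if P then (1:ℝ) else 0 := by
  split <;> norm_num

lemma pick_out {m n : ℕ} (is0 : Fin m) (js0 : Fin n) (g : Fin m → Fin n → ℝ) :
    ∑ i, ∑ j, (if is0 = i then (1:ℝ) else 0) * (if js0 = j then (1:ℝ) else 0) * g i j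
      = g is0 js0 := by
  simp [ite_mul, one_mul, zero_mul, Finset.sum_ite_eq]

lemma pick_out1 {m : ℕ} (is0 : Fin m) (g : Fin m → ℝ) :
    ∑ i, (if is0 = i then (1:ℝ) else 0) * g i = g is0 := by
  simp [ite_mul, Finset.sum_ite_eq]

lemma ind_sum_one {m : ℕ} (is0 : Fin m) :
    ∑ i, (if is0 = i then (1:ℝ) else 0) = 1 := by
  simp [Finset.sum_ite_eq]

lemma row_bound {m n : ℕ} (R : Fin m → Fin n → ℝ) (M : Fin n → ℝ)
    (hM : ∀ i j, R i j ≤ M j)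
    (u : Fin m → Fin n → ℝ) (hu0 : ∀ i j, 0 ≤ u i j)
    (y : Fin n → ℝ) (hcol : ∀ j, ∑ i, u i j = y j) :
    ∑ i, ∑ j, u i j * R i j ≤ ∑ j, y j * M j := by
  rw [Finset.sum_comm]
  apply Finset.sum_le_sum
  intro j _
  calc ∑ i, u i j * R i j ≤ ∑ i, u i j * M j :=
        Finset.sum_le_sum fun i _ => mul_le_mul_of_nonneg_left (hM i j) (hu0 i j)
    _ = y j * M j := by rw [← Finset.sum_mul, hcol j]

lemma col_bound {m n : ℕ} (C : Fin m → Fin n → ℝ) (M : Fin m → ℝ)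
    (hM : ∀ i j, C i j ≤ M i)
    (u : Fin m → Fin n → ℝ) (hu0 : ∀ i j, 0 ≤ u i j)
    (x : Fin m → ℝ) (hrow : ∀ i, ∑ j, u i j = x i) :
    ∑ i, ∑ j, u i j * C i j ≤ ∑ i, x i * M i := by
  apply Finset.sum_le_sum
  intro i _
  calc ∑ j, u i j * C i j ≤ ∑ j, u i j * M i :=
        Finset.sum_le_sum fun j _ => mul_le_mul_of_nonneg_left (hM i j) (hu0 i j)
    _ = x i * M i := by rw [← Finset.sum_mul, hrow i]

lemma marg_row {m n ℓ : ℕ} (f : ℕ → Fin m) (g : ℕ → Fin n) (i : Fin m) :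
    ∑ j, ((ℓ:ℝ)⁻¹ * ∑ t ∈ range ℓ,
        (if f t = i then (1:ℝ) else 0) * (if g t = j then (1:ℝ) else 0))
      = (ℓ:ℝ)⁻¹ * ∑ t ∈ range ℓ, (if f t = i then (1:ℝ) else 0) := by
  rw [← Finset.mul_sum]
  congr 1
  rw [Finset.sum_comm]
  refine Finset.sum_congr rfl fun t _ => ?_
  rw [← Finset.mul_sum, ind_sum_one, mul_one]

lemma marg_col {m n ℓ : ℕ} (f : ℕ → Fin m) (g : ℕ → Fin n) (j : Fin n) :
    ∑ i, ((ℓ:ℝ)⁻¹ * ∑ t ∈ range ℓ,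
        (if f t = i then (1:ℝ) else 0) * (if g t = j then (1:ℝ) else 0))
      = (ℓ:ℝ)⁻¹ * ∑ t ∈ range ℓ, (if g t = j then (1:ℝ) else 0) := by
  rw [← Finset.mul_sum]
  congr 1
  rw [Finset.sum_comm]
  refine Finset.sum_congr rfl fun t _ => ?_
  rw [← Finset.sum_mul, ind_sum_one, one_mul]

lemma coupling_value {m n : ℕ} (ℓ : ℕ) (f : ℕ → Fin m) (g : ℕ → Fin n)
    (G : Fin m → Fin n → ℝ) :
    ∑ i, ∑ j, ((ℓ:ℝ)⁻¹ * ∑ t ∈ range ℓ,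
        (if f t = i then (1:ℝ) else 0) * (if g t = j then (1:ℝ) else 0)) * G i j
      = (ℓ:ℝ)⁻¹ * ∑ t ∈ range ℓ, G (f t) (g t) := by
  calc ∑ i, ∑ j, ((ℓ:ℝ)⁻¹ * ∑ t ∈ range ℓ,
          (if f t = i then (1:ℝ) else 0) * (if g t = j then (1:ℝ) else 0)) * G i j
      = ∑ i, ∑ j, (ℓ:ℝ)⁻¹ * ∑ t ∈ range ℓ,
          (if f t = i then (1:ℝ) else 0) * (if g t = j then (1:ℝ) else 0) * G i j := by
        refine Finset.sum_congr rfl fun i _ => Finset.sum_congr rfl fun j _ => ?_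
        rw [mul_assoc, Finset.sum_mul]
    _ = (ℓ:ℝ)⁻¹ * ∑ i, ∑ j, ∑ t ∈ range ℓ,
          (if f t = i then (1:ℝ) else 0) * (if g t = j then (1:ℝ) else 0) * G i j := by
        simp_rw [Finset.mul_sum]
    _ = (ℓ:ℝ)⁻¹ * ∑ t ∈ range ℓ, ∑ i, ∑ j,
          (if f t = i then (1:ℝ) else 0) * (if g t = j then (1:ℝ) else 0) * G i j := by
        congr 1
        calc ∑ i, ∑ j, ∑ t ∈ range ℓ,
              (if f t = i then (1:ℝ) else 0) * (if g t = j then (1:ℝ) else 0) * G i j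
            = ∑ i, ∑ t ∈ range ℓ, ∑ j,
              (if f t = i then (1:ℝ) else 0) * (if g t = j then (1:ℝ) else 0) * G i j :=
              Finset.sum_congr rfl fun i _ => Finset.sum_comm
          _ = ∑ t ∈ range ℓ, ∑ i, ∑ j,
              (if f t = i then (1:ℝ) else 0) * (if g t = j then (1:ℝ) else 0) * G i j :=
              Finset.sum_comm
    _ = (ℓ:ℝ)⁻¹ * ∑ t ∈ range ℓ, G (f t) (g t) := by
        congr 1
        exact Finset.sum_congr rfl fun t _ => pick_out _ _ _

lemma sum_ind_mul {k : ℕ} (ℓ : ℕ) (g : ℕ → Fin k) (M : Fin k → ℝ) :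
    ∑ j, ((ℓ:ℝ)⁻¹ * ∑ t ∈ range ℓ, (if g t = j then (1:ℝ) else 0)) * M j
      = (ℓ:ℝ)⁻¹ * ∑ t ∈ range ℓ, M (g t) := by
  calc ∑ j, ((ℓ:ℝ)⁻¹ * ∑ t ∈ range ℓ, (if g t = j then (1:ℝ) else 0)) * M j
      = (ℓ:ℝ)⁻¹ * ∑ j, ∑ t ∈ range ℓ, (if g t = j then (1:ℝ) else 0) * M j := by
        simp_rw [mul_assoc, Finset.sum_mul, Finset.mul_sum]
    _ = (ℓ:ℝ)⁻¹ * ∑ t ∈ range ℓ, ∑ j, (if g t = j then (1:ℝ) else 0) * M j := by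
        rw [Finset.sum_comm]
    _ = (ℓ:ℝ)⁻¹ * ∑ t ∈ range ℓ, M (g t) := by
        congr 1
        exact Finset.sum_congr rfl fun t _ => pick_out1 _ _

/-- Two-player cycle-equilibrium lemma: a directed cycle
`(r_{i₁}, c_{j₁}, r_{i₂}, c_{j₂}, …, r_{i_ℓ}, c_{j_ℓ})` in the graph `G'`
(where `r_i → c_j` iff `R i j ≥ R i' j` for all `i'`, and `c_j → r_i` iff
`C i j ≥ C i j'` for all `j'`), with each player putting weight `1/ℓ` on each
cycle occurrence of its strategies, yields a personalized equilibrium. -/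
theorem cycle_is_personalized_equilibrium {m n : ℕ}
    (R C : Fin m → Fin n → ℝ) (ℓ : ℕ) (hℓ : 0 < ℓ)
    (is : ℕ → Fin m) (js : ℕ → Fin n)
    (hper_i : ∀ t, is (t + ℓ) = is t) (hper_j : ∀ t, js (t + ℓ) = js t)
    (hR : ∀ t i', R i' (js t) ≤ R (is t) (js t))
    (hC : ∀ t j', C (is (t + 1)) j' ≤ C (is (t + 1)) (js t)) :
    let x : Fin m → ℝ := fun i =>
      (((Finset.range ℓ).filter (fun t => is t = i)).card : ℝ) / (ℓ : ℝ)
    let y : Fin n → ℝ := fun j =>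
      (((Finset.range ℓ).filter (fun t => js t = j)).card : ℝ) / (ℓ : ℝ)
    IsDistFin x ∧ IsDistFin y ∧
    (∀ x', IsDistFin x' → payoff R x' y ≤ payoff R x y) ∧
    (∀ y', IsDistFin y' → payoff C x y' ≤ payoff C x y) := by
  intro x y
  haveI : Nonempty (Fin m) := ⟨is 0⟩
  haveI : Nonempty (Fin n) := ⟨js 0⟩
  have hisℓ : is ℓ = is 0 := by simpa using hper_i 0
  have hℓR : (0:ℝ) < (ℓ:ℝ) := by exact_mod_cast hℓ
  have hx : ∀ i, x i = (ℓ:ℝ)⁻¹ * ∑ t ∈ Finset.range ℓ, (if is t = i then (1:ℝ) else 0) := by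
    intro i
    show (((Finset.range ℓ).filter (fun t => is t = i)).card : ℝ) / (ℓ:ℝ) = _
    rw [Finset.card_filter, div_eq_inv_mul]
    congr 1
    push_cast
    rfl
  have hy : ∀ j, y j = (ℓ:ℝ)⁻¹ * ∑ t ∈ Finset.range ℓ, (if js t = j then (1:ℝ) else 0) := by
    intro j
    show (((Finset.range ℓ).filter (fun t => js t = j)).card : ℝ) / (ℓ:ℝ) = _
    rw [Finset.card_filter, div_eq_inv_mul]
    congr 1
    push_cast
    rfl
  have hxd : IsDistFin x := by
    constructor
    · intro i; exact div_nonneg (Nat.cast_nonneg _) (le_of_lt hℓR)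
    · simp only [hx]
      rw [← Finset.mul_sum, Finset.sum_comm]
      rw [Finset.sum_congr rfl (fun t _ => ind_sum_one (is t)), Finset.sum_const,
        Finset.card_range, nsmul_eq_mul, mul_one, inv_mul_cancel₀ (ne_of_gt hℓR)]
  have hyd : IsDistFin y := by
    constructor
    · intro j; exact div_nonneg (Nat.cast_nonneg _) (le_of_lt hℓR)
    · simp only [hy]
      rw [← Finset.mul_sum, Finset.sum_comm]
      rw [Finset.sum_congr rfl (fun t _ => ind_sum_one (js t)), Finset.sum_const,
        Finset.card_range, nsmul_eq_mul, mul_one, inv_mul_cancel₀ (ne_of_gt hℓR)]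
  -- column-wise maxima
  set MR : Fin n → ℝ := fun j => Finset.univ.sup' Finset.univ_nonempty (fun i => R i j)
    with hMRdef
  have hMR : ∀ i j, R i j ≤ MR j := fun i j => Finset.le_sup' (fun i' => R i' j) (Finset.mem_univ i)
  have hMReq : ∀ t, MR (js t) = R (is t) (js t) := fun t =>
    le_antisymm (Finset.sup'_le _ _ fun i _ => hR t i) (hMR _ _)
  set MC : Fin m → ℝ := fun i => Finset.univ.sup' Finset.univ_nonempty (fun j => C i j)
    with hMCdef
  have hMC : ∀ i j, C i j ≤ MC i := fun i j => Finset.le_sup' (fun j' => C i j') (Finset.mem_univ j)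
  have hMCeq : ∀ t, MC (is (t + 1)) = C (is (t + 1)) (js t) := fun t =>
    le_antisymm (Finset.sup'_le _ _ fun j _ => hC t j) (hMC _ _)
  -- value of the cycle couplings
  have hVR : ∑ j, y j * MR j = (ℓ:ℝ)⁻¹ * ∑ t ∈ range ℓ, R (is t) (js t) := by
    simp only [hy]
    rw [sum_ind_mul]
    congr 1
    exact Finset.sum_congr rfl fun t _ => hMReq t
  have hVC : ∑ i, x i * MC i = (ℓ:ℝ)⁻¹ * ∑ t ∈ range ℓ, C (is (t + 1)) (js t) := by
    simp only [hx]
    rw [sum_ind_mul]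
    congr 1
    rw [← sum_shift_cycle (fun t => MC (is t)) (by simp [hisℓ])]
    exact Finset.sum_congr rfl fun t _ => hMCeq t
  refine ⟨hxd, hyd, ?_, ?_⟩
  · -- row player
    intro x' hx'
    have h1 : payoff R x' y ≤ ∑ j, y j * MR j := by
      apply csSup_le
      · exact ⟨∑ i, ∑ j, (x' i * y j) * R i j, fun i j => x' i * y j,
          fun i j => mul_nonneg (hx'.1 i) (hyd.1 j),
          fun i => by rw [← Finset.mul_sum, hyd.2, mul_one],
          fun j => by rw [← Finset.sum_mul, hx'.2, one_mul], rfl⟩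
      · rintro v ⟨u, hu0, hurow, hucol, rfl⟩
        exact row_bound R MR hMR u hu0 y hucol
    have h2 : ∑ j, y j * MR j ≤ payoff R x y := by
      apply le_csSup
      · refine ⟨∑ j, y j * MR j, ?_⟩
        rintro v ⟨u, hu0, hurow, hucol, rfl⟩
        exact row_bound R MR hMR u hu0 y hucol
      · refine ⟨fun i j => (ℓ:ℝ)⁻¹ * ∑ t ∈ range ℓ,
          (if is t = i then (1:ℝ) else 0) * (if js t = j then (1:ℝ) else 0),
          fun i j => mul_nonneg (inv_nonneg.mpr (le_of_lt hℓR))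
            (Finset.sum_nonneg fun t _ => mul_nonneg ind_nonneg ind_nonneg),
          fun i => by rw [marg_row, ← hx], fun j => by rw [marg_col, ← hy], ?_⟩
        rw [coupling_value, hVR]
    linarith
  · -- column player
    intro y' hy'
    have h1 : payoff C x y' ≤ ∑ i, x i * MC i := by
      apply csSup_le
      · exact ⟨∑ i, ∑ j, (x i * y' j) * C i j, fun i j => x i * y' j,
          fun i j => mul_nonneg (hxd.1 i) (hy'.1 j),
          fun i => by rw [← Finset.mul_sum, hy'.2, mul_one],
          fun j => by rw [← Finset.sum_mul, hxd.2, one_mul], rfl⟩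
      · rintro v ⟨u, hu0, hurow, hucol, rfl⟩
        exact col_bound C MC hMC u hu0 x hurow
    have h2 : ∑ i, x i * MC i ≤ payoff C x y := by
      apply le_csSup
      · refine ⟨∑ i, x i * MC i, ?_⟩
        rintro v ⟨u, hu0, hurow, hucol, rfl⟩
        exact col_bound C MC hMC u hu0 x hurow
      · refine ⟨fun i j => (ℓ:ℝ)⁻¹ * ∑ t ∈ range ℓ,
          (if is (t + 1) = i then (1:ℝ) else 0) * (if js t = j then (1:ℝ) else 0),
          fun i j => mul_nonneg (inv_nonneg.mpr (le_of_lt hℓR))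
            (Finset.sum_nonneg fun t _ => mul_nonneg ind_nonneg ind_nonneg),
          fun i => ?_, fun j => by rw [marg_col (fun t => is (t + 1)) js, ← hy], ?_⟩
        · rw [marg_row (fun t => is (t + 1)) js,
            sum_shift_cycle (fun t => if is t = i then (1:ℝ) else 0) (by simp only [hisℓ]), ← hx]
        · rw [coupling_value ℓ (fun t => is (t + 1)) js, hVC]
    linarith
end
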